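/- For every real number q > 0 and all real x, y, the exact Taylor expansion f_q(x, δ(q) + y) = A(q)·x + B(q)·y + Λ(q)·y² holds, where A(q) = −(1 + q² + 2q⁴ + q⁶ + q⁸)/(q + q³)², B(q) = (q² − 1)²(1 + q² + q⁴)/q⁴, and Λ(q) = q⁶(1 + q² + q⁴)/((1+q²)²(1 + q² + q⁴ + q⁶ + q⁸ + q^{10} + q^{12})). -/

import Mathlib

/-- The loop value δ(q) of the trivalent category (G₂)_q. -/
noncomputable def G2del (q : ℝ) : ℝ :=
  q ^ 10 + q ^ 8 + q ^ 2 + 1 + 1 / q ^ 2 + 1 / q ^ 8 + 1 / q ^ 10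

/-- The triangle coefficient c(q) of (G₂)_q. -/
noncomputable def G2c (q : ℝ) : ℝ :=
  -((q ^ 2 - 1 + 1 / q ^ 2) / (q ^ 4 + 1 / q ^ 4))

/-- The square root ξ(q) appearing in the minimal idempotents of Mor(2,2) of (G₂)_q. -/
noncomputable def G2xi (q : ℝ) : ℝ :=
  (1 + q ^ 2) ^ 2 * (1 - q ^ 2 + q ^ 6 - q ^ 8 + q ^ 10 - q ^ 14 + q ^ 16) /
    (q ^ 6 * (1 + q ^ 8))

/-- The function f_q(α,t) = γ_{α,t}(s♯·s) built from the minimal idempotent y₋. -/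
noncomputable def G2f (q α t : ℝ) : ℝ :=
  G2del q * (-(G2del q + 1) * (G2c q) ^ 2 - G2xi q + 1) / (-2 * G2xi q)
    + t ^ 2 * (G2del q * ((G2c q) ^ 2 - 2 * G2c q - 2) + G2xi q + (G2c q) ^ 2
        - 2 * G2c q - 1) / (-2 * G2del q * G2xi q)
    - α * (G2del q * (G2c q + 2) * G2c q - G2xi q + (G2c q) ^ 2 + 1) / (-2 * G2xi q)
    + t * (G2del q * G2c q + G2del q + G2c q) / (-G2xi q)

/-!
As a function of `(α, t)`, `f_q` is affine in `α` and quadratic in `t`, so its Taylor expansion at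
`(0, δ)` is exact. What remains is that `f_q(0, δ) = 0` and that the three coefficients are the
stated rational functions of `q`; these are polynomial identities once `δ`, `c`, `ξ` are unfolded and
denominators cleared. The only denominator whose nonvanishing needs an argument is `ξ`: its
numerator contains `Φ₁₅(q²)`, and the cyclotomic polynomial `Φ₁₅` has no real roots.
-/

lemma cyclotomic_fifteen_pos (u : ℝ) : 0 < 1 - u + u ^ 3 - u ^ 4 + u ^ 5 - u ^ 7 + u ^ 8 := by
  nlinarith [sq_nonneg (u ^ 4 - u ^ 3 / 2), sq_nonneg (u ^ 3 - u ^ 2), sq_nonneg (u ^ 2 - u),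
    sq_nonneg (u - 1 / 2), sq_nonneg (u ^ 2 - 1), sq_nonneg u, sq_nonneg (u ^ 3 - u)]

noncomputable def G2fAlpha (q : ℝ) : ℝ :=
  -(G2del q * (G2c q + 2) * G2c q - G2xi q + (G2c q) ^ 2 + 1) / (-2 * G2xi q)

noncomputable def G2fLin (q : ℝ) : ℝ :=
  (G2del q * G2c q + G2del q + G2c q) / (-G2xi q)

noncomputable def G2fQuad (q : ℝ) : ℝ :=
  (G2del q * ((G2c q) ^ 2 - 2 * G2c q - 2) + G2xi q + (G2c q) ^ 2 - 2 * G2c q - 1) /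
    (-2 * G2del q * G2xi q)

lemma G2f_add (q α t y : ℝ) :
    G2f q α (t + y) = G2f q 0 t + G2fAlpha q * α + (2 * G2fQuad q * t + G2fLin q) * y
      + G2fQuad q * y ^ 2 := by
  unfold G2f G2fAlpha G2fLin G2fQuad
  ring

section

variable {q : ℝ}

lemma G2del_pos (hq : q ≠ 0) : 0 < G2del q := by
  unfold G2del
  positivity

lemma G2xi_ne_zero (hq : q ≠ 0) : G2xi q ≠ 0 := by
  unfold G2xi
  refine div_ne_zero (mul_ne_zero (by positivity) ?_) (by positivity)
  convert (cyclotomic_fifteen_pos (q ^ 2)).ne' using 1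
  ring

lemma G2f_zero_G2del (hq : q ≠ 0) : G2f q 0 (G2del q) = 0 := by
  have hξ := G2xi_ne_zero hq
  have hδ := (G2del_pos hq).ne'
  unfold G2f
  field_simp
  unfold G2del G2c G2xi
  field_simp
  ring

lemma G2fAlpha_eq (hq : q ≠ 0) :
    G2fAlpha q = -((1 + q ^ 2 + 2 * q ^ 4 + q ^ 6 + q ^ 8) / (q + q ^ 3) ^ 2) := by
  have hξ := G2xi_ne_zero hq
  unfold G2fAlpha
  field_simp
  unfold G2del G2c G2xi
  field_simp
  ring

lemma G2fQuad_eq (hq : q ≠ 0) : G2fQuad q = q ^ 6 * (1 + q ^ 2 + q ^ 4) /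
    ((1 + q ^ 2) ^ 2 * (1 + q ^ 2 + q ^ 4 + q ^ 6 + q ^ 8 + q ^ 10 + q ^ 12)) := by
  have hξ := G2xi_ne_zero hq
  have hδ := (G2del_pos hq).ne'
  unfold G2fQuad
  field_simp
  unfold G2del G2c G2xi
  field_simp
  ring

lemma two_mul_G2fQuad_mul_G2del_add_G2fLin (hq : q ≠ 0) :
    2 * G2fQuad q * G2del q + G2fLin q = (q ^ 2 - 1) ^ 2 * (1 + q ^ 2 + q ^ 4) / q ^ 4 := by
  have hξ := G2xi_ne_zero hq
  have hδ := (G2del_pos hq).ne'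
  unfold G2fQuad G2fLin
  field_simp
  unfold G2del G2c G2xi
  field_simp
  ring

end

/-- The exact Taylor expansion of f_q at the trivial point (0, δ(q)):
f_q(x, δ(q)+y) = A(q)x + B(q)y + Λ(q)y². -/
theorem G2_f_taylor (q : ℝ) (hq : 0 < q) (x y : ℝ) :
    G2f q x (G2del q + y)
      = (-((1 + q ^ 2 + 2 * q ^ 4 + q ^ 6 + q ^ 8) / (q + q ^ 3) ^ 2)) * x
        + ((q ^ 2 - 1) ^ 2 * (1 + q ^ 2 + q ^ 4) / q ^ 4) * y
        + (q ^ 6 * (1 + q ^ 2 + q ^ 4) /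
            ((1 + q ^ 2) ^ 2 * (1 + q ^ 2 + q ^ 4 + q ^ 6 + q ^ 8 + q ^ 10 + q ^ 12))) * y ^ 2 := by
  have hq0 := hq.ne'
  rw [G2f_add, G2f_zero_G2del hq0, G2fAlpha_eq hq0, two_mul_G2fQuad_mul_G2del_add_G2fLin hq0,
    G2fQuad_eq hq0]
  ring
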